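/- arXiv:2412.16959 — 3 statements merged into one kernel-verified Lean document; each statement's English description precedes it below -/
import Mathlib

section
/- Let A be an associative ring with invertible element q in its center, and let x, y ∈ A satisfy x y = q^{2m} y x for some integer m. Define F^q(x, m) = ∏_{r=1}^{|m|} (1 + q^{(2r−1)·sgn(m)} x)^{sgn(m)} (empty product for m = 0), assuming the relevant factors (1 + q^{±(2r−1)} x) are invertible when m < 0. Then y · F^q(x, m) = F^q(x, −m)⁻¹ · y, where F^q(x,−m)⁻¹ exists under the same invertibility assumptions. -/
lemma stmt2_revmap {α : Type*} (g : ℕ → α) (n : ℕ) :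
    (List.map g (List.range n)).reverse
      = List.map (fun r => g (n - 1 - r)) (List.range n) := by
  induction n with
  | zero => simp
  | succ n ih =>
      nth_rewrite 1 [List.range_succ]
      rw [List.map_append, List.reverse_append, List.range_succ_eq_map (n := n)]
      simp only [List.map_cons, List.map_nil, List.reverse_cons, List.reverse_nil,
        List.nil_append, List.singleton_append, List.map_map, ih]
      have h0 : n + 1 - 1 - 0 = n := by omega
      rw [h0]
      congr 1
      apply List.map_congr_left
      intro a ha
      simp only [Function.comp_apply, Nat.succ_eq_add_one]
      congr 1
      omega

lemma stmt2_inv_prod {G : Type*} [Group G] (l : List G) :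
    (l.map fun a => a⁻¹).prod = l.reverse.prod⁻¹ := by
  rw [List.prod_inv_reverse l.reverse, List.map_reverse, List.reverse_reverse]

lemma stmt2_key {A : Type} [Ring A] (q : Aˣ) (hq : ∀ a : A, (q : A) * a = a * (q : A))
    (m : ℤ) (x y : A)
    (hxy : x * y = ((q ^ (2 * m) : Aˣ) : A) * (y * x)) (k : ℤ) :
    (1 + ((q ^ k : Aˣ) : A) * x) * y = y * (1 + ((q ^ (k + 2 * m) : Aˣ) : A) * x) := by
  have hc : ∀ (j : ℤ) (a : A), ((q ^ j : Aˣ) : A) * a = a * ((q ^ j : Aˣ) : A) := by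
    intro j a
    exact Commute.units_zpow_left (u := q) (hq a) j
  have h1 : ((q ^ k : Aˣ) : A) * (x * y) = y * (((q ^ (k + 2 * m) : Aˣ) : A) * x) := by
    rw [hxy, ← mul_assoc, ← Units.val_mul, ← zpow_add, ← mul_assoc, hc (k + 2 * m) y,
      mul_assoc]
  calc (1 + ((q ^ k : Aˣ) : A) * x) * y
      = y + ((q ^ k : Aˣ) : A) * (x * y) := by rw [add_mul, one_mul, mul_assoc]
    _ = y + y * (((q ^ (k + 2 * m) : Aˣ) : A) * x) := by rw [h1]
    _ = y * (1 + ((q ^ (k + 2 * m) : Aˣ) : A) * x) := by rw [mul_add, mul_one]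

lemma stmt2_shift {A : Type} [Ring A] (q : Aˣ) (hq : ∀ a : A, (q : A) * a = a * (q : A))
    (m : ℤ) (x y : A)
    (hxy : x * y = ((q ^ (2 * m) : Aˣ) : A) * (y * x)) (f : ℕ → ℤ) (n : ℕ) :
    ((List.range n).map (fun (r : ℕ) => 1 + ((q ^ (f r) : Aˣ) : A) * x)).prod * y
      = y * ((List.range n).map (fun (r : ℕ) => 1 + ((q ^ (f r + 2 * m) : Aˣ) : A) * x)).prod := by
  induction n with
  | zero => simp
  | succ n ih =>
      rw [List.range_succ, List.map_append, List.map_append, List.prod_append,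
        List.prod_append]
      simp only [List.map_cons, List.map_nil, List.prod_cons, List.prod_nil, mul_one]
      rw [mul_assoc, stmt2_key q hq m x y hxy, ← mul_assoc, ih, mul_assoc]

lemma stmt2_coe_prod {M : Type*} [Monoid M] (l : List Mˣ) :
    ((l.prod : Mˣ) : M) = (l.map (fun (w : Mˣ) => (w : M))).prod :=
  map_list_prod (Units.coeHom M) l

/-- Let `A` be a ring with a central unit `q`, and `x y ∈ A` with `x y = q^{2m} y x`.
With `F^q(x, m) = ∏_{r=1}^{|m|} (1 + q^{(2r−1)·sgn(m)} x)^{sgn(m)}` (the factors being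
units of `A`, encoding the invertibility assumptions), one has
`y · F^q(x, m) = F^q(x, −m)⁻¹ · y`. -/
theorem stmt2 {A : Type} [Ring A] (q : Aˣ) (hq : ∀ a : A, (q : A) * a = a * (q : A))
    (m : ℤ) (x y : A)
    (hxy : x * y = ((q ^ (2 * m) : Aˣ) : A) * (y * x))
    (u v : ℕ → Aˣ)
    (hu : ∀ r ∈ Finset.Icc 1 m.natAbs,
      ((u r : A)) = 1 + ((q ^ ((2 * (r : ℤ) - 1) * m.sign) : Aˣ) : A) * x)
    (hv : ∀ r ∈ Finset.Icc 1 m.natAbs,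
      ((v r : A)) = 1 + ((q ^ ((2 * (r : ℤ) - 1) * (-m).sign) : Aˣ) : A) * x) :
    y * ((((List.range m.natAbs).map fun r => u (r + 1) ^ m.sign).prod : Aˣ) : A)
      = (((((List.range m.natAbs).map fun r => v (r + 1) ^ (-m).sign).prod)⁻¹ : Aˣ) : A) * y := by
  rcases lt_trichotomy m 0 with hm | hm | hm
  · -- m < 0
    have hs : m.sign = -1 := Int.sign_eq_neg_one_of_neg hm
    have hs' : (-m).sign = 1 := Int.sign_eq_one_of_pos (by omega)
    have hn : (m.natAbs : ℤ) = -m := by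
      rw [← Int.natAbs_neg]; exact Int.natAbs_of_nonneg (by omega)
    simp only [hs, hs'] at hu hv ⊢
    simp only [zpow_one, zpow_neg_one]
    set n := m.natAbs with hndef
    set lu : List Aˣ := (List.range n).map (fun r => u (r + 1)) with hlu
    set V : Aˣ := lu.reverse.prod with hV
    have hP : ((List.range n).map fun r => (u (r + 1))⁻¹).prod = V⁻¹ := by
      rw [hV, ← stmt2_inv_prod lu, hlu, List.map_map]; rfl
    set Q : Aˣ := ((List.range n).map fun r => v (r + 1)).prod with hQ
    have hQc : ((Q : Aˣ) : A)
        = ((List.range n).map (fun (r : ℕ) => 1 + ((q ^ (2 * (r : ℤ) + 1) : Aˣ) : A) * x)).prod := by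
      rw [hQ, stmt2_coe_prod, List.map_map]
      congr 1
      apply List.map_congr_left
      intro r hr
      simp only [List.mem_range] at hr
      have h1 : r + 1 ∈ Finset.Icc 1 n := by simp [Finset.mem_Icc]; omega
      simp only [Function.comp_apply, Units.coeHom_apply]
      rw [hv _ h1]
      have he : (2 * ((r + 1 : ℕ) : ℤ) - 1) * 1 = 2 * (r : ℤ) + 1 := by push_cast; ring
      rw [he]
    have hVc : ((V : Aˣ) : A)
        = ((List.range n).map
            (fun (r : ℕ) => 1 + ((q ^ (2 * (r : ℤ) + 1 + 2 * m) : Aˣ) : A) * x)).prod := by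
      rw [hV, stmt2_coe_prod, hlu,
        stmt2_revmap (fun r => u (r + 1)) n, List.map_map]
      congr 1
      apply List.map_congr_left
      intro r hr
      simp only [List.mem_range] at hr
      have h1 : n - 1 - r + 1 ∈ Finset.Icc 1 n := by simp [Finset.mem_Icc]; omega
      simp only [Function.comp_apply, Units.coeHom_apply]
      rw [hu _ h1]
      have he : (2 * ((n - 1 - r + 1 : ℕ) : ℤ) - 1) * (-1) = 2 * (r : ℤ) + 1 + 2 * m := by
        have : ((n - 1 - r + 1 : ℕ) : ℤ) = (n : ℤ) - r := by omega
        rw [this]; omega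
      rw [he]
    have hQy : ((Q : Aˣ) : A) * y = y * ((V : Aˣ) : A) := by
      rw [hQc, hVc]
      exact stmt2_shift q hq m x y hxy (fun r => 2 * (r : ℤ) + 1) n
    rw [hP]
    have key : ((Q⁻¹ : Aˣ) : A) * (((Q : Aˣ) : A) * y * ((V⁻¹ : Aˣ) : A))
        = y * ((V⁻¹ : Aˣ) : A) := by
      rw [← mul_assoc, ← mul_assoc, Units.inv_mul, one_mul]
    rw [← key, hQy, mul_assoc y, Units.mul_inv, mul_one]
  · -- m = 0
    subst hm
    simp
  · -- m > 0
    have hs : m.sign = 1 := Int.sign_eq_one_of_pos hm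
    have hs' : (-m).sign = -1 := Int.sign_eq_neg_one_of_neg (by omega)
    have hn : (m.natAbs : ℤ) = m := Int.natAbs_of_nonneg hm.le
    simp only [hs, hs'] at hu hv ⊢
    simp only [zpow_one, zpow_neg_one]
    set n := m.natAbs with hndef
    set lv : List Aˣ := (List.range n).map (fun r => v (r + 1)) with hlv
    set W : Aˣ := lv.reverse.prod with hW
    have hQ : ((List.range n).map fun r => (v (r + 1))⁻¹).prod = W⁻¹ := by
      rw [hW, ← stmt2_inv_prod lv, hlv, List.map_map]; rfl
    rw [hQ, inv_inv]
    have hWc : ((W : Aˣ) : A)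
        = ((List.range n).map
            (fun (r : ℕ) => 1 + ((q ^ (2 * (r : ℤ) + 1 - 2 * m) : Aˣ) : A) * x)).prod := by
      rw [hW, stmt2_coe_prod, hlv,
        stmt2_revmap (fun r => v (r + 1)) n, List.map_map]
      congr 1
      apply List.map_congr_left
      intro r hr
      simp only [List.mem_range] at hr
      have h1 : n - 1 - r + 1 ∈ Finset.Icc 1 n := by simp [Finset.mem_Icc]; omega
      simp only [Function.comp_apply, Units.coeHom_apply]
      rw [hv _ h1]
      have he : (2 * ((n - 1 - r + 1 : ℕ) : ℤ) - 1) * (-1) = 2 * (r : ℤ) + 1 - 2 * m := by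
        have : ((n - 1 - r + 1 : ℕ) : ℤ) = (n : ℤ) - r := by omega
        rw [this]; omega
      rw [he]
    have hPc : ((((List.range n).map fun r => u (r + 1)).prod : Aˣ) : A)
        = ((List.range n).map
            (fun (r : ℕ) => 1 + ((q ^ (2 * (r : ℤ) + 1 - 2 * m + 2 * m) : Aˣ) : A) * x)).prod := by
      rw [stmt2_coe_prod, List.map_map]
      congr 1
      apply List.map_congr_left
      intro r hr
      simp only [List.mem_range] at hr
      have h1 : r + 1 ∈ Finset.Icc 1 n := by simp [Finset.mem_Icc]; omega
      simp only [Function.comp_apply, Units.coeHom_apply]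
      rw [hu _ h1]
      have he : (2 * ((r + 1 : ℕ) : ℤ) - 1) * 1 = 2 * (r : ℤ) + 1 - 2 * m + 2 * m := by
        push_cast; ring
      rw [he]
    rw [hPc, hWc]
    exact (stmt2_shift q hq m x y hxy (fun r => 2 * (r : ℤ) + 1 - 2 * m) n).symm
end

section
/- Let Q : V × V → ℤ be antisymmetric, k ∈ V, and Q' = μ_k(Q) the mutated matrix. Define the monomial map on exponent vectors: given t' ∈ ℤ^V, let t ∈ ℤ^V be determined by t_v = t'_v for v ≠ k and t_k = −t'_k + ∑_{v ∈ V} [Q(v,k)]_+ t'_v, where [a]_+ = max{a,0}. If ∑_{v ∈ V} Q'(u,v) t'_v ≡ 0 (mod m) for all u in some subset V₀ ⊆ V containing k, then ∑_{v ∈ V} Q(u,v) t_v ≡ 0 (mod m) for all u ∈ V₀. -/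
/-- Matrix mutation of an antisymmetric integer matrix `Q` at the index `k`. -/
def mutate {V : Type} [DecidableEq V] (Q : V → V → ℤ) (k : V) : V → V → ℤ :=
  fun u v =>
    if u = k ∨ v = k then -Q u v
    else Q u v + (Q u k * |Q k v| + |Q u k| * Q k v) / 2

lemma half_lemma (a b : ℤ) : (a * |b| + |a| * b) / 2 = max a 0 * max b 0 - min a 0 * min b 0 := by
  rcases le_total 0 a with ha | ha <;> rcases le_total 0 b with hb | hb <;>
    simp [abs_of_nonneg, abs_of_nonpos, max_eq_left, max_eq_right, min_eq_left, min_eq_right, *] <;>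
    omega

lemma ptwise (a b : ℤ) : a * max (-b) 0 = (max a 0 * max b 0 - min a 0 * min b 0) - max a 0 * b := by
  rcases le_total 0 a with ha | ha <;> rcases le_total 0 b with hb | hb <;>
    simp [max_eq_left, max_eq_right, min_eq_left, min_eq_right, neg_nonneg, neg_nonpos, *]

/-- The monomial part of quantum mutation preserves the balancedness conditions:
if `∑_v Q'(u,v) t'_v ≡ 0 (mod m)` for all `u ∈ V₀` (where `Q' = μ_k(Q)` and `k ∈ V₀`),
then `∑_v Q(u,v) t_v ≡ 0 (mod m)` for all `u ∈ V₀`, where `t_v = t'_v` for `v ≠ k` and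
`t_k = −t'_k + ∑_v [Q(v,k)]_+ t'_v`.  (Taking `m = 0` gives the equality case.) -/
theorem stmt9 {V : Type} [Fintype V] [DecidableEq V] (Q : V → V → ℤ)
    (hQ : ∀ u v, Q u v = - Q v u) (k : V) (m : ℤ)
    (V₀ : Set V) (hk : k ∈ V₀) (t' t : V → ℤ)
    (ht : ∀ v, t v = if v = k then -t' k + ∑ v', max (Q v' k) 0 * t' v' else t' v)
    (hbal : ∀ u ∈ V₀, m ∣ ∑ v, mutate Q k u v * t' v) :
    ∀ u ∈ V₀, m ∣ ∑ v, Q u v * t v := by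
  classical
  have hQkk : Q k k = 0 := by have := hQ k k; omega
  have hS2 : m ∣ ∑ v, Q k v * t' v := by
    have h := hbal k hk
    have heq : ∑ v, mutate Q k k v * t' v = -∑ v, Q k v * t' v := by
      rw [← Finset.sum_neg_distrib]
      exact Finset.sum_congr rfl fun v _ => by simp [mutate]
    rw [heq] at h
    exact (dvd_neg).mp h
  intro u hu
  rcases eq_or_ne u k with rfl | huk
  · have hsum : ∑ v, Q u v * t v = ∑ v, Q u v * t' v := by
      refine Finset.sum_congr rfl fun v _ => ?_
      rw [ht v]
      by_cases hv : v = u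
      · subst hv; simp [hQkk]
      · simp [hv]
    rw [hsum]; exact hS2
  · have claimA : ∑ v, Q u v * t v
        = (∑ v, Q u v * t' v) - 2 * Q u k * t' k
          + Q u k * ∑ v', max (Q v' k) 0 * t' v' := by
      have h1 : ∀ v, Q u v * t v = Q u v * t' v + (if v = k then Q u k * (t k - t' k) else 0) := by
        intro v
        by_cases hv : v = k
        · subst hv; rw [if_pos rfl]; ring
        · rw [ht v, if_neg hv, if_neg hv]; ring
      rw [Finset.sum_congr rfl fun v _ => h1 v, Finset.sum_add_distrib,
        Finset.sum_ite_eq' Finset.univ k (fun _ => Q u k * (t k - t' k))]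
      have htk : t k - t' k = -2 * t' k + ∑ v', max (Q v' k) 0 * t' v' := by
        rw [ht k, if_pos rfl]; ring
      simp only [Finset.mem_univ, if_true]
      rw [htk]; ring
    have claimB : ∑ v, mutate Q k u v * t' v
        = (∑ v, Q u v * t' v) - 2 * Q u k * t' k
          + ∑ v, (if v = k then 0
              else (max (Q u k) 0 * max (Q k v) 0 - min (Q u k) 0 * min (Q k v) 0) * t' v) := by
      have h1 : ∀ v, mutate Q k u v * t' v = Q u v * t' v
          + ((if v = k then -2 * Q u k * t' k else 0)
             + (if v = k then 0
                else (max (Q u k) 0 * max (Q k v) 0 - min (Q u k) 0 * min (Q k v) 0) * t' v)) := by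
        intro v
        by_cases hv : v = k
        · rw [hv, if_pos rfl, if_pos rfl,
            show mutate Q k u k = -Q u k from by simp [mutate]]
          ring
        · rw [if_neg hv, if_neg hv,
            show mutate Q k u v = Q u v + (Q u k * |Q k v| + |Q u k| * Q k v) / 2 from by
              simp [mutate, hv, huk],
            half_lemma]
          ring
      rw [Finset.sum_congr rfl fun v _ => h1 v, Finset.sum_add_distrib, Finset.sum_add_distrib,
        Finset.sum_ite_eq' Finset.univ k (fun _ => -2 * Q u k * t' k)]
      simp only [Finset.mem_univ, if_true]
      ring
    have claimC : Q u k * ∑ v', max (Q v' k) 0 * t' v'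
        = (∑ v, (if v = k then 0
            else (max (Q u k) 0 * max (Q k v) 0 - min (Q u k) 0 * min (Q k v) 0) * t' v))
          - max (Q u k) 0 * ∑ v, Q k v * t' v := by
      rw [Finset.mul_sum, Finset.mul_sum, ← Finset.sum_sub_distrib]
      refine Finset.sum_congr rfl fun v _ => ?_
      by_cases hv : v = k
      · subst hv; simp [hQkk]
      · rw [if_neg hv, show Q v k = -(Q k v) from by rw [hQ v k]]
        linear_combination (t' v) * ptwise (Q u k) (Q k v)
    have final : ∑ v, Q u v * t v
        = (∑ v, mutate Q k u v * t' v) - max (Q u k) 0 * ∑ v, Q k v * t' v := by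
      rw [claimA, claimB, claimC]; ring
    rw [final]
    exact dvd_sub (hbal u hu) (Dvd.dvd.mul_left hS2 _)
end

section
/- Let R be a commutative ring with invertible ω^{1/2}, and let V, V_e, p, Q, Q_e be as in the cutting setup: p : V_e → V surjective with fibers of size 1 or 2, Q_e antisymmetric on V_e, and Q(u,v) := ∑_{w ∈ p⁻¹(v), w' ∈ p⁻¹(u)} Q_e(w', w) antisymmetric on V, with the additional assumption that Q_e(w', w) = 0 whenever w' ≠ w lie in the same fiber. Then the assignment S(Z_v) := ∏_{w ∈ p⁻¹(v)} Z_w (Weyl-ordered) extends to a well-defined injective R-algebra homomorphism S : T_ω(Q) → T_ω(Q_e) between the quantum tori. -/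
/-!
Write `M(t)` for the ordered monomial `∏_v Z_v^{t_v}` (product in the order of `V`). Moving
factors past each other gives `M(t) M(s) = ω^{2c(t,s)} M(t+s)` for an integer bilinear form `c`,
and the Weyl-ordered monomials `[t] = ω^{c(t,t)} M(t)` then multiply by
`[t] [s] = ω^{⟨t,s⟩_Q} [t+s]`, where `⟨t,s⟩_Q = ∑ t_u s_v Q(u,v) = c(t,s) - c(s,t)` only
depends on `Q`. Since `Q` is the push-forward of `Q_e` along `p`,
`⟨t ∘ p, s ∘ p⟩_{Q_e} = ⟨t,s⟩_Q`, so `[t] ↦ [t ∘ p]` is multiplicative; it maps a basis to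
a linearly independent family because `t ↦ t ∘ p` is injective. Finally `[1_v] = Z_v`, and
`[1_{p⁻¹(v)}]` is the ordered product over the fibre, as `Q_e` vanishes on each fibre.
-/

/-- The image of a unit of `R` in the units of an `R`-algebra `A`. -/
noncomputable def unitsMap {R A : Type} [CommRing R] [Ring A] [Algebra R A] (w : Rˣ) : Aˣ :=
  Units.map (algebraMap R A).toMonoidHom w

/-- The (unordered) Laurent monomial `∏ Z_v^{t_v}` along a list of vertices. -/
def listMono {A V : Type} [Ring A] (Z : V → Aˣ) (t : V → ℤ) (l : List V) : Aˣ :=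
  (l.map fun v => Z v ^ t v).prod

/-- `A`, with distinguished units `Z_v`, is the quantum torus
`T_ω(Q) = R⟨Z_v^{±1}⟩/(Z_v Z_w = ω^{2Q(v,w)} Z_w Z_v)`: the relations hold, and the
monomials `Z^t`, `t ∈ ℤ^V`, form an `R`-basis of `A`. -/
structure IsQuantumTorus (R : Type) [CommRing R] {V : Type} [Fintype V] [LinearOrder V]
    (A : Type) [Ring A] [Algebra R A] (w : Rˣ) (Q : V → V → ℤ) (Z : V → Aˣ) : Prop where
  rel : ∀ v v', Z v * Z v' = unitsMap (A := A) w ^ (2 * Q v v') * (Z v' * Z v)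
  free : Function.Bijective fun c : (V → ℤ) →₀ R =>
    c.sum fun t r => r • ((listMono Z t (Finset.univ.sort (· ≤ ·)) : Aˣ) : A)

open Finset

section Reordering
variable {G : Type*} [Group G] {V : Type*}

theorem mul_zpow_eq_of_mul_eq {c x y : G} (hc : Commute c y) (h : x * y = c * (y * x)) (b : ℤ) :
    x * y ^ b = c ^ b * (y ^ b * x) := by
  have hxy : SemiconjBy x y (c * y) := by rw [SemiconjBy, h, mul_assoc]
  rw [(hxy.zpow_right b).eq, hc.mul_zpow, mul_assoc]

theorem zpow_mul_zpow_eq_of_mul_eq {c x y : G} (hc : ∀ g, Commute c g) (h : x * y = c * (y * x))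
    (a b : ℤ) : x ^ a * y ^ b = c ^ (a * b) * (y ^ b * x ^ a) := by
  have hyx : y ^ b * x = c ^ (-b) * (x * y ^ b) := by
    rw [mul_zpow_eq_of_mul_eq (hc y) h, zpow_neg, inv_mul_cancel_left]
  rw [mul_zpow_eq_of_mul_eq ((hc x).zpow_left _) hyx a, ← zpow_mul, neg_mul, zpow_neg,
    mul_comm b a, mul_inv_cancel_left]

/-- `reorderExponent Q t s l = ∑_{i < j} s_{l_i} t_{l_j} Q(l_j, l_i)`. -/
def reorderExponent (Q : V → V → ℤ) (t s : V → ℤ) : List V → ℤ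
  | [] => 0
  | v :: l => s v * (l.map fun u => t u * Q u v).sum + reorderExponent Q t s l

variable {W : G} (hW : ∀ g, Commute W g) (Z : V → G) {Q : V → V → ℤ}
  (hZ : ∀ u v, Z u * Z v = W ^ Q u v * (Z v * Z u))
include hW

theorem mul_zpow_left_comm (k : ℤ) (g c : G) : g * (W ^ k * c) = W ^ k * (g * c) :=
  (((hW g).zpow_left k).left_comm c).symm

include hZ

theorem list_prod_zpow_mul_zpow (t : V → ℤ) (v : V) (b : ℤ) (l : List V) :
    (l.map fun u => Z u ^ t u).prod * Z v ^ b
      = W ^ (b * (l.map fun u => t u * Q u v).sum)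
          * (Z v ^ b * (l.map fun u => Z u ^ t u).prod) := by
  induction l with
  | nil => simp
  | cons u l ih =>
    simp only [List.map_cons, List.prod_cons, List.sum_cons]
    rw [mul_assoc, ih, mul_zpow_left_comm hW, ← mul_assoc (Z u ^ t u),
      zpow_mul_zpow_eq_of_mul_eq (fun g => (hW g).zpow_left _) (hZ u v), ← zpow_mul, mul_assoc,
      ← mul_assoc (W ^ _), ← zpow_add, mul_assoc (Z v ^ b)]
    ring_nf

theorem list_prod_zpow_mul_list_prod_zpow (t s : V → ℤ) (l : List V) :
    (l.map fun u => Z u ^ t u).prod * (l.map fun u => Z u ^ s u).prod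
      = W ^ reorderExponent Q t s l * (l.map fun u => Z u ^ (t u + s u)).prod := by
  induction l with
  | nil => simp [reorderExponent]
  | cons v l ih =>
    simp only [List.map_cons, List.prod_cons, reorderExponent]
    rw [mul_assoc, ← mul_assoc _ (Z v ^ s v), list_prod_zpow_mul_zpow hW Z hZ]
    simp only [mul_assoc]
    rw [ih, mul_zpow_left_comm hW, mul_zpow_left_comm hW, mul_zpow_left_comm hW,
      ← mul_assoc (W ^ _), ← zpow_add, ← mul_assoc (Z v ^ t v), ← zpow_add]

end Reordering

section ReorderExponent
variable {V : Type*} (Q : V → V → ℤ)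

theorem reorderExponent_add_left (t t' s : V → ℤ) (l : List V) :
    reorderExponent Q (t + t') s l = reorderExponent Q t s l + reorderExponent Q t' s l := by
  induction l with
  | nil => rfl
  | cons v l ih => simp only [reorderExponent, ih, Pi.add_apply, add_mul, List.sum_map_add]; ring

theorem reorderExponent_add_right (t s s' : V → ℤ) (l : List V) :
    reorderExponent Q t (s + s') l = reorderExponent Q t s l + reorderExponent Q t s' l := by
  induction l with
  | nil => rfl
  | cons v l ih => simp only [reorderExponent, ih, Pi.add_apply]; ring

theorem reorderExponent_add_add (t s : V → ℤ) (l : List V) :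
    reorderExponent Q (t + s) (t + s) l = reorderExponent Q t t l + reorderExponent Q t s l
      + reorderExponent Q s t l + reorderExponent Q s s l := by
  rw [reorderExponent_add_left, reorderExponent_add_right, reorderExponent_add_right]
  ring

theorem reorderExponent_self_eq_zero {t : V → ℤ}
    (h : ∀ u v, t u ≠ 0 → t v ≠ 0 → Q u v = 0) (l : List V) : reorderExponent Q t t l = 0 := by
  induction l with
  | nil => rfl
  | cons v l ih =>
    rw [reorderExponent, ih, add_zero]
    by_cases hv : t v = 0
    · rw [hv, zero_mul]
    · rw [List.sum_eq_zero, mul_zero]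
      simp only [List.mem_map]
      rintro _ ⟨u, -, rfl⟩
      by_cases hu : t u = 0
      · rw [hu, zero_mul]
      · rw [h u v hu hv, mul_zero]

theorem reorderExponent_sub_swap (hQ : ∀ u v, Q u v = -Q v u) (t s : V → ℤ) (l : List V) :
    reorderExponent Q t s l - reorderExponent Q s t l
      = (l.map fun u => t u * (l.map fun v => s v * Q u v).sum).sum := by
  induction l with
  | nil => rfl
  | cons v l ih =>
    have hvv : Q v v = 0 := by linarith [hQ v v]
    have hcol : (l.map fun u => t u * (s v * Q u v)).sum
        = s v * (l.map fun u => t u * Q u v).sum := by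
      rw [← List.sum_map_mul_left]; congr 1; exact List.map_congr_left fun u _ => by ring
    have hrow : (l.map fun u => s u * Q v u).sum = -(l.map fun u => s u * Q u v).sum := by
      rw [neg_eq_neg_one_mul, ← List.sum_map_mul_left]
      congr 1; exact List.map_congr_left fun u _ => by rw [hQ]; ring
    simp only [reorderExponent, List.map_cons, List.sum_cons, mul_add, List.sum_map_add, hvv,
      hcol, hrow, ← ih]
    ring

end ReorderExponent

theorem Finset.sum_map_sort {α M : Type*} [LinearOrder α] [AddCommMonoid M] (s : Finset α)
    (f : α → M) :
    ((s.sort (· ≤ ·)).map f).sum = ∑ x ∈ s, f x := by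
  rw [← List.sum_toFinset _ (s.sort_nodup _), s.sort_toFinset]

theorem Finset.filter_sort {α : Type*} [LinearOrder α] (P : α → Prop) [DecidablePred P]
    (s : Finset α) :
    (s.sort (· ≤ ·)).filter (fun a => decide (P a)) = (s.filter P).sort (· ≤ ·) := by
  refine List.Perm.eq_of_pairwise' (r := (· ≤ ·)) ?_ ?_ ?_
  · exact (Finset.pairwise_sort _ _).filter _
  · exact Finset.pairwise_sort _ _
  · rw [← Multiset.coe_eq_coe, ← Multiset.filter_coe, Finset.sort_eq, Finset.sort_eq,
      ← Finset.filter_val]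

theorem list_prod_zpow_indicator {G V : Type*} [Group G] (Z : V → G) (P : V → Prop)
    [DecidablePred P] (l : List V) :
    (l.map fun u => Z u ^ (if P u then (1 : ℤ) else 0)).prod
      = ((l.filter (P ·)).map Z).prod := by
  induction l with
  | nil => rfl
  | cons u l ih =>
    by_cases h : P u <;>
      simp only [List.map_cons, List.prod_cons, List.filter_cons, h, ih, if_true, if_false,
        decide_true, decide_false, Bool.false_eq_true, zpow_one, zpow_zero, one_mul]

theorem sum_comp_mul_eq_sum_mul_sum_fiber {ι κ M : Type*} [Fintype ι] [Fintype κ]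
    [DecidableEq κ] [NonUnitalNonAssocSemiring M] (p : ι → κ) (g : κ → M) (f : ι → M) :
    ∑ x, g (p x) * f x = ∑ u, g u * ∑ x with p x = u, f x := by
  rw [← sum_fiberwise univ p]
  refine sum_congr rfl fun u _ => ?_
  rw [mul_sum]
  exact sum_congr rfl fun x hx => by rw [(mem_filter.1 hx).2]

theorem sum_mul_sum_comp_eq_of_fiber_sum {V Ve : Type*} [Fintype V] [Fintype Ve] [DecidableEq V]
    (p : Ve → V) (Qe : Ve → Ve → ℤ) (Q : V → V → ℤ)
    (hQ : ∀ u v, Q u v = ∑ x with p x = u, ∑ y with p y = v, Qe x y) (t s : V → ℤ) :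
    ∑ x, t (p x) * ∑ y, s (p y) * Qe x y = ∑ u, t u * ∑ v, s v * Q u v := by
  simp only [sum_comp_mul_eq_sum_mul_sum_fiber p s (Qe _)]
  rw [sum_comp_mul_eq_sum_mul_sum_fiber p t]
  refine sum_congr rfl fun u _ => ?_
  rw [sum_comm]
  simp only [hQ, mul_sum]

theorem Module.Basis.constr_mul_of_mul_eq_smul {ι R A B : Type*} [Add ι] [CommSemiring R]
    [Semiring A] [Algebra R A] [Semiring B] [Algebra R B] (b : Basis ι R A) (f : ι → B)
    (ε : ι → ι → R) (hb : ∀ i j, b i * b j = ε i j • b (i + j))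
    (hf : ∀ i j, f i * f j = ε i j • f (i + j)) (x y : A) :
    b.constr R f (x * y) = b.constr R f x * b.constr R f y := by
  have hbil : (LinearMap.mul R A).compr₂ (b.constr R f)
      = (LinearMap.mul R B).compl₁₂ (b.constr R f) (b.constr R f) :=
    LinearMap.ext_basis b b fun i j => by simp [hb, hf]
  exact congrArg (fun B => B x y) hbil

section QuantumTorus
variable {R : Type} [CommRing R] {V : Type} [Fintype V] [LinearOrder V] {A : Type} [Ring A]
  [Algebra R A]

theorem unitsMap_commute (w : Rˣ) (g : Aˣ) : Commute (unitsMap w) g :=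
  Units.ext (Algebra.commutes (w : R) (g : A))

theorem val_unitsMap_zpow (w : Rˣ) (k : ℤ) :
    ((unitsMap w ^ k : Aˣ) : A) = algebraMap R A ((w ^ k : Rˣ) : R) := by
  rw [unitsMap, ← map_zpow]
  rfl

noncomputable def weylMono (w : Rˣ) (Q : V → V → ℤ) (Z : V → Aˣ) (t : V → ℤ) : A :=
  ((w ^ reorderExponent Q t t (univ.sort (· ≤ ·)) : Rˣ) : R) •
    (listMono Z t (univ.sort (· ≤ ·)) : A)

theorem weylMono_zero (w : Rˣ) (Q : V → V → ℤ) (Z : V → Aˣ) : weylMono w Q Z 0 = 1 := by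
  rw [weylMono, reorderExponent_self_eq_zero Q (t := 0) (fun _ _ h => absurd rfl h)]
  simp [listMono]

theorem weylMono_indicator (w : Rˣ) {Q : V → V → ℤ} (Z : V → Aˣ) (P : V → Prop)
    [DecidablePred P] (hP : ∀ u v, P u → P v → Q u v = 0) :
    weylMono w Q Z (fun u => if P u then 1 else 0)
      = (((univ.filter P).sort (· ≤ ·)).map fun u => (Z u : A)).prod := by
  have hPQ : ∀ u v, (if P u then (1 : ℤ) else 0) ≠ 0 →
      (if P v then (1 : ℤ) else 0) ≠ 0 → Q u v = 0 := fun u v hu hv =>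
    hP u v (by simpa using hu) (by simpa using hv)
  rw [weylMono, reorderExponent_self_eq_zero Q hPQ, zpow_zero, Units.val_one, one_smul,
    listMono, list_prod_zpow_indicator, Finset.filter_sort, ← Units.coeHom_apply, map_list_prod,
    List.map_map]
  rfl

theorem weylMono_single (w : Rˣ) {Q : V → V → ℤ} (Z : V → Aˣ) {v : V} (hv : Q v v = 0) :
    weylMono w Q Z (fun u => if u = v then 1 else 0) = Z v := by
  rw [weylMono_indicator w Z (· = v) fun u u' hu hu' => by rw [hu, hu', hv]]
  simp [Finset.filter_eq']

variable {w : Rˣ} {Q : V → V → ℤ} {Z : V → Aˣ}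

namespace IsQuantumTorus
variable (hT : IsQuantumTorus R A w Q Z)
include hT

theorem listMono_mul (t s : V → ℤ) :
    (listMono Z t (univ.sort (· ≤ ·)) : A) * listMono Z s (univ.sort (· ≤ ·))
      = ((w ^ (2 * reorderExponent Q t s (univ.sort (· ≤ ·))) : Rˣ) : R) •
          (listMono Z (t + s) (univ.sort (· ≤ ·)) : A) := by
  have hrel : ∀ u v, Z u * Z v = (unitsMap w ^ (2 : ℤ)) ^ Q u v * (Z v * Z u) := fun u v => by
    rw [← zpow_mul]; exact hT.rel u v
  have h := list_prod_zpow_mul_list_prod_zpow (fun g => (unitsMap_commute w g).zpow_left 2) Z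
    hrel t s (univ.sort (· ≤ ·))
  rw [← zpow_mul] at h
  rw [Algebra.smul_def, ← val_unitsMap_zpow, ← Units.val_mul, ← Units.val_mul]
  exact congrArg Units.val h

theorem weylMono_mul (hQ : ∀ u v, Q u v = -Q v u) (t s : V → ℤ) :
    weylMono w Q Z t * weylMono w Q Z s
      = ((w ^ (∑ u, t u * ∑ v, s v * Q u v) : Rˣ) : R) • weylMono w Q Z (t + s) := by
  have hswap := reorderExponent_sub_swap Q hQ t s (univ.sort (· ≤ ·))
  simp only [Finset.sum_map_sort] at hswap
  rw [weylMono, weylMono, weylMono, smul_mul_smul_comm, hT.listMono_mul, smul_smul, smul_smul,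
    ← Units.val_mul, ← Units.val_mul, ← Units.val_mul, ← zpow_add, ← zpow_add,
    ← zpow_add, reorderExponent_add_add]
  congr 3
  linarith

noncomputable def monoBasis : Module.Basis (V → ℤ) R A :=
  .ofRepr (LinearEquiv.ofBijective
    (Finsupp.linearCombination R fun t => (listMono Z t (univ.sort (· ≤ ·)) : A))
    (by convert hT.free; exact Finsupp.linearCombination_apply R _)).symm

theorem monoBasis_apply (t : V → ℤ) :
    hT.monoBasis t = (listMono Z t (univ.sort (· ≤ ·)) : A) := by
  rw [monoBasis, Module.Basis.coe_ofRepr, LinearEquiv.symm_symm]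
  exact (Finsupp.linearCombination_single R 1 t).trans (one_smul R _)

noncomputable def weylBasis : Module.Basis (V → ℤ) R A :=
  hT.monoBasis.unitsSMul fun t => w ^ reorderExponent Q t t (univ.sort (· ≤ ·))

theorem coe_weylBasis : ⇑hT.weylBasis = weylMono w Q Z := by
  ext t
  rw [weylBasis, Module.Basis.unitsSMul_apply, monoBasis_apply, Units.smul_def]
  rfl

theorem exists_injective_algHom_weylMono {Ve Ae : Type} [Fintype Ve] [LinearOrder Ve] [Ring Ae]
    [Algebra R Ae] {p : Ve → V} (hp : Function.Surjective p) {Qe : Ve → Ve → ℤ}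
    {Ze : Ve → Aeˣ} (hTe : IsQuantumTorus R Ae w Qe Ze) (hQe : ∀ x y, Qe x y = -Qe y x)
    (hQanti : ∀ u v, Q u v = -Q v u)
    (hQ : ∀ u v, Q u v = ∑ x with p x = u, ∑ y with p y = v, Qe x y) :
    ∃ S : A →ₐ[R] Ae, Function.Injective S ∧
      ∀ t, S (weylMono w Q Z t) = weylMono w Qe Ze (t ∘ p) := by
  let S := hT.weylBasis.constr R fun t => weylMono w Qe Ze (t ∘ p)
  have hS : ∀ t, S (weylMono w Q Z t) = weylMono w Qe Ze (t ∘ p) := fun t => by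
    rw [← hT.coe_weylBasis, Module.Basis.constr_basis]
  have hmul : ∀ x y, S (x * y) = S x * S y :=
    hT.weylBasis.constr_mul_of_mul_eq_smul _
      (fun t s => ((w ^ ∑ u, t u * ∑ v, s v * Q u v : Rˣ) : R))
      (by simpa only [hT.coe_weylBasis] using hT.weylMono_mul hQanti)
      (fun t s => by
        rw [hTe.weylMono_mul hQe]
        simp only [Function.comp_apply]
        rw [sum_mul_sum_comp_eq_of_fiber_sum p Qe Q hQ]
        rfl)
  have hone : S 1 = 1 := by
    rw [← weylMono_zero w Q Z, hS]
    exact weylMono_zero w Qe Ze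
  refine ⟨AlgHom.ofLinearMap S hone hmul,
    hT.weylBasis.injective_constr_of_linearIndependent (R₂ := R) ?_, hS⟩
  rw [← hTe.coe_weylBasis]
  exact hTe.weylBasis.linearIndependent.comp _ hp.injective_comp_right

end IsQuantumTorus
end QuantumTorus

theorem stmt12_general {R : Type} [CommRing R] (w : Rˣ)
    {V Ve : Type} [Fintype V] [LinearOrder V] [Fintype Ve] [LinearOrder Ve]
    (p : Ve → V) (hp : Function.Surjective p)
    (Qe : Ve → Ve → ℤ) (hQe : ∀ x y, Qe x y = - Qe y x)
    (hQe0 : ∀ x y, x ≠ y → p x = p y → Qe x y = 0)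
    (Q : V → V → ℤ) (hQanti : ∀ u v, Q u v = - Q v u)
    (hQ : ∀ u v, Q u v = ∑ x ∈ Finset.univ.filter (fun x => p x = u),
        ∑ y ∈ Finset.univ.filter (fun y => p y = v), Qe x y)
    (A Ae : Type) [Ring A] [Algebra R A] [Ring Ae] [Algebra R Ae]
    (Z : V → Aˣ) (Ze : Ve → Aeˣ)
    (hT : IsQuantumTorus R A w Q Z) (hTe : IsQuantumTorus R Ae w Qe Ze) :
    ∃ S : A →ₐ[R] Ae, Function.Injective S ∧
      ∀ v, S ((Z v : A)) =
        (((Finset.univ.filter fun x => p x = v).sort (· ≤ ·)).map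
          fun x => ((Ze x : Ae))).prod := by
  obtain ⟨S, hS_inj, hS⟩ := hT.exists_injective_algHom_weylMono hp hTe hQe hQanti hQ
  refine ⟨S, hS_inj, fun v => ?_⟩
  have hfib : ∀ x y, p x = v → p y = v → Qe x y = 0 := fun x y hx hy => by
    rcases eq_or_ne x y with rfl | hxy
    · linarith [hQe x x]
    · exact hQe0 x y hxy (hx.trans hy.symm)
  rw [← weylMono_single w Z (by linarith [hQanti v v] : Q v v = 0), hS]
  exact weylMono_indicator w Ze (fun x => p x = v) hfib

/-- The splitting homomorphism: in the cutting setup (`p : V_e → V` surjective with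
fibers of size 1 or 2, `Q_e` antisymmetric on `V_e` vanishing between distinct elements
of the same fiber, `Q(u,v) = ∑_{w' ∈ p⁻¹(u), w ∈ p⁻¹(v)} Q_e(w',w)`), the assignment
`S(Z_v) = ∏_{w ∈ p⁻¹(v)} Z_w` extends to a well-defined injective `R`-algebra
homomorphism `S : T_ω(Q) → T_ω(Q_e)`. -/
theorem stmt12 {R : Type} [CommRing R] (w σ : Rˣ) (hσ : σ * σ = w)
    {V Ve : Type} [Fintype V] [LinearOrder V] [Fintype Ve] [LinearOrder Ve]
    (p : Ve → V) (hp : Function.Surjective p)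
    (hfib : ∀ v, (Finset.univ.filter fun x => p x = v).card ≤ 2)
    (Qe : Ve → Ve → ℤ) (hQe : ∀ x y, Qe x y = - Qe y x)
    (hQe0 : ∀ x y, x ≠ y → p x = p y → Qe x y = 0)
    (Q : V → V → ℤ) (hQanti : ∀ u v, Q u v = - Q v u)
    (hQ : ∀ u v, Q u v = ∑ x ∈ Finset.univ.filter (fun x => p x = u),
        ∑ y ∈ Finset.univ.filter (fun y => p y = v), Qe x y)
    (A Ae : Type) [Ring A] [Algebra R A] [Ring Ae] [Algebra R Ae]
    (Z : V → Aˣ) (Ze : Ve → Aeˣ)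
    (hT : IsQuantumTorus R A w Q Z) (hTe : IsQuantumTorus R Ae w Qe Ze) :
    ∃ S : A →ₐ[R] Ae, Function.Injective S ∧
      ∀ v, S ((Z v : A)) =
        (((Finset.univ.filter fun x => p x = v).sort (· ≤ ·)).map
          fun x => ((Ze x : Ae))).prod :=
  stmt12_general w p hp Qe hQe hQe0 Q hQanti hQ A Ae Z Ze hT hTe
end
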